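/- Corollary E.1 (uniform outer set with multiple instruments). Let M be a positive natural number, let 𝒵 ⊆ ℝ^M, and for each m ∈ {1, …, M} let c_m ∈ [1, ∞) and let f_m, r_m : 𝒵 → ℝ satisfy, for every z ∈ 𝒵, r_m(z) ∈ [1/c_m, c_m] and f_m(z) = r_m(z)·θ(z), where θ : 𝒵 → ℝ. Then: (i) θ belongs to the intersection ∩_{m=1}^{M} Θ₁^m, i.e. for every m and every z ∈ 𝒵, θ(z) ∈ [f_m(z)/c_m, c_m·f_m(z)] if f_m(z) ≥ 0 and θ(z) ∈ [c_m·f_m(z), f_m(z)/c_m] if f_m(z) < 0; and (ii) for every θ̃ ∈ ∩_{m=1}^{M} Θ₁^m, sup_{z ∈ 𝒵} |θ(z) − θ̃(z)| ≤ min_{m ∈ {1,…,M}} ((c_m² − 1)/c_m) · sup_{z ∈ 𝒵} |f_m(z)| (as an inequality in [0, ∞]). -/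

import Mathlib

/-- Membership of `θ̃` in the uniform outer set `Θ₁^m` determined by the `m`-th LIV estimand
`f m` and constant `c m` on `𝒵 ⊆ ℝ^M`. -/
def MemTheta1 {M : ℕ} (𝒵 : Set (Fin M → ℝ)) (f : (Fin M → ℝ) → ℝ) (c : ℝ)
    (θt : (Fin M → ℝ) → ℝ) : Prop :=
  ∀ z ∈ 𝒵,
    (0 ≤ f z → θt z ∈ Set.Icc (f z / c) (c * f z)) ∧
    (f z < 0 → θt z ∈ Set.Icc (c * f z) (f z / c))

/-! Pointwise, `θ` and every `θ̃ ∈ Θ₁^m` lie between `f_m / c_m` and `c_m f_m`, an interval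
of length `(c_m² − 1) / c_m · |f_m|`; taking suprema over `𝒵` gives (ii) for each `m`. -/

open Set

lemma mem_Icc_of_mul_nonneg_of_mem_Icc_inv {c r θ : ℝ} (hc : 0 < c)
    (hr : r ∈ Icc (1 / c) c) (hrθ : 0 ≤ r * θ) : θ ∈ Icc (r * θ / c) (c * (r * θ)) := by
  have hr₀ : 0 < r := (one_div_pos.2 hc).trans_le hr.1
  have hθ : 0 ≤ θ := nonneg_of_mul_nonneg_right hrθ hr₀
  have hcr : 1 ≤ c * r := (div_le_iff₀' hc).1 hr.1
  constructor
  · rw [div_le_iff₀' hc]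
    exact mul_le_mul_of_nonneg_right hr.2 hθ
  · calc θ = 1 * θ := (one_mul θ).symm
      _ ≤ c * r * θ := mul_le_mul_of_nonneg_right hcr hθ
      _ = c * (r * θ) := mul_assoc c r θ

lemma mem_Icc_of_mul_neg_of_mem_Icc_inv {c r θ : ℝ} (hc : 0 < c)
    (hr : r ∈ Icc (1 / c) c) (hrθ : r * θ < 0) : θ ∈ Icc (c * (r * θ)) (r * θ / c) := by
  have h := mem_Icc_of_mul_nonneg_of_mem_Icc_inv (θ := -θ) hc hr (by rw [mul_neg]; linarith)
  simp only [mul_neg, neg_div] at h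
  simpa only [neg_neg] using neg_mem_Icc_iff.1 h

section MemTheta1

variable {M : ℕ} {𝒵 : Set (Fin M → ℝ)} {f θ : (Fin M → ℝ) → ℝ} {c : ℝ}

theorem memTheta1_of_eq_mul {r : (Fin M → ℝ) → ℝ}
    (hc : 0 < c) (hr : ∀ z ∈ 𝒵, r z ∈ Icc (1 / c) c) (hf : ∀ z ∈ 𝒵, f z = r z * θ z) :
    MemTheta1 𝒵 f c θ := fun z hz => by
  rw [hf z hz]
  exact ⟨mem_Icc_of_mul_nonneg_of_mem_Icc_inv hc (hr z hz),
    mem_Icc_of_mul_neg_of_mem_Icc_inv hc (hr z hz)⟩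

lemma MemTheta1.mem_uIcc (h : MemTheta1 𝒵 f c θ) {z : Fin M → ℝ} (hz : z ∈ 𝒵) :
    θ z ∈ uIcc (c * f z) (f z / c) := by
  rcases le_or_gt 0 (f z) with hf | hf
  · exact Icc_subset_uIcc' ((h z hz).1 hf)
  · exact Icc_subset_uIcc ((h z hz).2 hf)

lemma MemTheta1.abs_sub_le {θ' : (Fin M → ℝ) → ℝ}
    (hc : 1 ≤ c) (h : MemTheta1 𝒵 f c θ) (h' : MemTheta1 𝒵 f c θ') {z : Fin M → ℝ}
    (hz : z ∈ 𝒵) : |θ z - θ' z| ≤ (c ^ 2 - 1) / c * |f z| := by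
  have hc₀ : 0 < c := one_pos.trans_le hc
  have hwidth : c * f z - f z / c = (c ^ 2 - 1) / c * f z := by field_simp
  calc |θ z - θ' z| ≤ |c * f z - f z / c| :=
        Real.dist_le_of_mem_uIcc (h.mem_uIcc hz) (h'.mem_uIcc hz)
    _ = (c ^ 2 - 1) / c * |f z| := by
      rw [hwidth, abs_mul, abs_of_nonneg (div_nonneg (by nlinarith) hc₀.le)]

end MemTheta1

lemma ENNReal.biSup_ofReal_le_ofReal_mul_biSup {α : Type*} {s : Set α} {g h : α → ℝ}
    {k : ℝ} (hk : 0 ≤ k) (hgh : ∀ x ∈ s, g x ≤ k * h x) :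
    ⨆ x ∈ s, ENNReal.ofReal (g x) ≤ ENNReal.ofReal k * ⨆ x ∈ s, ENNReal.ofReal (h x) := by
  simp only [ENNReal.mul_iSup, ← ENNReal.ofReal_mul hk]
  exact iSup₂_mono fun x hx => ENNReal.ofReal_le_ofReal (hgh x hx)

theorem stmt_18_general
    (M : ℕ) (𝒵 : Set (Fin M → ℝ))
    (c : Fin M → ℝ) (hc : ∀ m, 1 ≤ c m)
    (f r : Fin M → (Fin M → ℝ) → ℝ) (θ : (Fin M → ℝ) → ℝ)
    (hr : ∀ m, ∀ z ∈ 𝒵, r m z ∈ Set.Icc (1 / c m) (c m))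
    (hf : ∀ m, ∀ z ∈ 𝒵, f m z = r m z * θ z) :
    (∀ m, MemTheta1 𝒵 (f m) (c m) θ) ∧
    (∀ θt : (Fin M → ℝ) → ℝ, (∀ m, MemTheta1 𝒵 (f m) (c m) θt) →
      (⨆ z ∈ 𝒵, ENNReal.ofReal |θ z - θt z|)
        ≤ ⨅ m, ENNReal.ofReal ((c m ^ 2 - 1) / c m) *
            ⨆ z ∈ 𝒵, ENNReal.ofReal |f m z|) := by
  have hθ : ∀ m, MemTheta1 𝒵 (f m) (c m) θ := fun m =>
    memTheta1_of_eq_mul (one_pos.trans_le (hc m)) (hr m) (hf m)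
  refine ⟨hθ, fun θt hθt => le_iInf fun m => ?_⟩
  have hwidth : 0 ≤ (c m ^ 2 - 1) / c m :=
    div_nonneg (by nlinarith [hc m]) (zero_le_one.trans (hc m))
  exact ENNReal.biSup_ofReal_le_ofReal_mul_biSup hwidth fun z hz =>
    (hθ m).abs_sub_le (hc m) (hθt m) hz

/-- **Corollary E.1, uniform outer set with multiple instruments.**
If for each `m` the `m`-th ratio `r m` takes values in `[1/c_m, c_m]` and
`f_m(z) = r_m(z)·θ(z)` on `𝒵 ⊆ ℝ^M`, then (i) `θ ∈ ∩_m Θ₁^m`, and (ii) every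
`θ̃ ∈ ∩_m Θ₁^m` satisfies
`sup_{z ∈ 𝒵} |θ(z) − θ̃(z)| ≤ min_m ((c_m² − 1)/c_m)·sup_{z ∈ 𝒵} |f_m(z)|` in `[0, ∞]`. -/
theorem stmt_18
    (M : ℕ) (hM : 0 < M) (𝒵 : Set (Fin M → ℝ))
    (c : Fin M → ℝ) (hc : ∀ m, 1 ≤ c m)
    (f r : Fin M → (Fin M → ℝ) → ℝ) (θ : (Fin M → ℝ) → ℝ)
    (hr : ∀ m, ∀ z ∈ 𝒵, r m z ∈ Set.Icc (1 / c m) (c m))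
    (hf : ∀ m, ∀ z ∈ 𝒵, f m z = r m z * θ z) :
    (∀ m, MemTheta1 𝒵 (f m) (c m) θ) ∧
    (∀ θt : (Fin M → ℝ) → ℝ, (∀ m, MemTheta1 𝒵 (f m) (c m) θt) →
      (⨆ z ∈ 𝒵, ENNReal.ofReal |θ z - θt z|)
        ≤ ⨅ m, ENNReal.ofReal ((c m ^ 2 - 1) / c m) *
            ⨆ z ∈ 𝒵, ENNReal.ofReal |f m z|) :=
  stmt_18_general M 𝒵 c hc f r θ hr hf
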